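/- arXiv:1012.3571 — 7 statements merged into one kernel-verified Lean document; each statement's English description precedes it below -/
import Mathlib

section
/- Let k ≥ 1. There exists an invertible k×k complex matrix A with A·Ā = −I_k (where Ā is the entrywise complex conjugate of A) if and only if k is even. -/
/-- for `k ≥ 1`, there exists an invertible `k×k` complex matrix `A`
with `A·Ā = −I_k` (where `Ā` is the entrywise complex conjugate of `A`) if and only
if `k` is even. -/
theorem exists_mul_conj_eq_neg_one_iff_even (k : ℕ) (hk : 1 ≤ k) :
    (∃ A : Matrix (Fin k) (Fin k) ℂ, IsUnit A ∧
        A * A.map (starRingEnd ℂ) = -(1 : Matrix (Fin k) (Fin k) ℂ)) ↔ Even k := by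
  constructor
  · rintro ⟨A, -, h⟩
    by_contra hodd
    rw [Nat.not_even_iff_odd] at hodd
    have hdet := congrArg Matrix.det h
    have hmd : (A.map (starRingEnd ℂ)).det = starRingEnd ℂ A.det :=
      ((starRingEnd ℂ).map_det A).symm
    rw [Matrix.det_mul, hmd, Matrix.det_neg, Matrix.det_one, mul_one,
      Complex.mul_conj, Fintype.card_fin, hodd.neg_one_pow] at hdet
    have : Complex.normSq A.det = -1 := by
      exact_mod_cast hdet
    linarith [Complex.normSq_nonneg A.det]
  · rintro ⟨m, hm⟩
    have hm' : m + m = k := hm.symm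
    let e : Fin m ⊕ Fin m ≃ Fin k := finSumFinEquiv.trans (finCongr hm')
    let B : Matrix (Fin m ⊕ Fin m) (Fin m ⊕ Fin m) ℂ :=
      Matrix.fromBlocks 0 1 (-1) 0
    have hBmap : B.map (starRingEnd ℂ) = B := by
      simp [B, Matrix.fromBlocks_map, Matrix.map_one _ (map_zero _) (map_one _),
        Matrix.map_zero _ (map_zero _)]
      ext i j
      simp [Matrix.map_apply, Matrix.one_apply, apply_ite]
    have hBB : B * B = -1 := by
      rw [show (-1 : Matrix (Fin m ⊕ Fin m) (Fin m ⊕ Fin m) ℂ)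
          = -(Matrix.fromBlocks 1 0 0 1) by rw [Matrix.fromBlocks_one],
        Matrix.fromBlocks_neg]
      simp [B, Matrix.fromBlocks_multiply]
    set A : Matrix (Fin k) (Fin k) ℂ := Matrix.reindex e e B with hA
    have hmap : A.map (starRingEnd ℂ) = A := by
      rw [hA]
      simp only [Matrix.reindex_apply]
      rw [← Matrix.submatrix_map, hBmap]
    have key : A * A.map (starRingEnd ℂ) = -1 := by
      rw [hmap, hA]
      simp only [Matrix.reindex_apply]
      rw [Matrix.submatrix_mul_equiv, hBB]
      ext i j
      simp [Matrix.submatrix_apply, Matrix.one_apply]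
    refine ⟨A, ?_, key⟩
    have h1 : A * (-A) = 1 := by
      rw [show -A = -(A.map (starRingEnd ℂ)) from by rw [hmap], mul_neg, key, neg_neg]
    have h2 : (-A) * A = 1 := by
      have := mul_eq_one_comm.mp h1
      exact this
    exact ⟨⟨A, -A, h1, h2⟩, rfl⟩
end

section
/- Let m ≥ 1, let w_1,…,w_m be positive integers with gcd(w_1,…,w_m) = 1, and let k_1,…,k_m be positive integers such that w_{j₀}·k_{j₀} is odd for some index j₀. Suppose λ ∈ ℂ with |λ| = 1 is such that for every j there exists an invertible k_j×k_j complex matrix A_j with A_j·Ā_j = λ^{w_j}·I_{k_j}. Then λ = 1. -/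
/-! Each `μ = λ^{w_j}` is real: conjugating `A Ā = μ I` gives `Ā A = μ̄ I`, and comparing the two
ways of bracketing `A Ā A` forces `μ = μ̄`. Together with `|μ| = 1` this gives `λ^{2 w_j} = 1`
for all `j`, hence `λ² = 1` since the weights are coprime. Finally `μ^{k_j} = det(A Ā) = |det A|²`
is nonnegative, which rules out `λ = -1` at the index where `w_j k_j` is odd. -/

open ComplexOrder

lemma pow_finset_gcd_eq_one {M ι : Type*} [Monoid M] {x : M} {s : Finset ι} {f : ι → ℕ}
    (hx : ∀ i ∈ s, x ^ f i = 1) : x ^ s.gcd f = 1 :=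
  orderOf_dvd_iff_pow_eq_one.mp <| Finset.dvd_gcd fun i hi => orderOf_dvd_of_pow_eq_one (hx i hi)

namespace Matrix

variable {K n : Type*} [Field K] [StarRing K] [Fintype n] [DecidableEq n]
  {A : Matrix n n K} {μ : K}

lemma map_star_mul_eq_smul_one (hA : A * A.map (starRingEnd K) = μ • 1) :
    A.map (starRingEnd K) * A = starRingEnd K μ • 1 := by
  have h := congrArg (map · (starRingEnd K)) hA
  simpa [map_mul, map_map, Function.comp_def, map_smul', map_one] using h

lemma star_eq_of_mul_map_star_eq_smul_one (hA0 : A ≠ 0)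
    (hA : A * A.map (starRingEnd K) = μ • 1) : starRingEnd K μ = μ :=
  smul_left_injective K hA0 <| by
    calc starRingEnd K μ • A = A * (A.map (starRingEnd K) * A) := by
          rw [map_star_mul_eq_smul_one hA, mul_smul_comm, mul_one]
      _ = μ • A := by rw [← Matrix.mul_assoc, hA, smul_mul_assoc, Matrix.one_mul]

lemma pow_card_eq_det_mul_star_det (hA : A * A.map (starRingEnd K) = μ • 1) :
    μ ^ Fintype.card n = A.det * star A.det := by
  have h := congrArg det hA
  rw [det_mul, det_smul, det_one, mul_one, ← RingHom.mapMatrix_apply, ← RingHom.map_det] at h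
  exact h.symm

lemma pow_card_nonneg_of_mul_map_star_eq_smul_one [PartialOrder K] [StarOrderedRing K]
    (hA : A * A.map (starRingEnd K) = μ • 1) : 0 ≤ μ ^ Fintype.card n :=
  pow_card_eq_det_mul_star_det hA ▸ mul_star_self_nonneg A.det

end Matrix

lemma Complex.sq_eq_one_of_conj_eq_of_norm_eq_one {z : ℂ} (hz : starRingEnd ℂ z = z)
    (h1 : ‖z‖ = 1) : z ^ 2 = 1 := by
  rw [sq, ← congrArg (z * ·) hz, Complex.mul_conj, Complex.normSq_eq_norm_sq, h1]
  norm_num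

theorem lambda_eq_one_of_odd_weight_times_mult_general (m : ℕ)
    (w k : Fin m → ℕ) (hk : ∀ j, 0 < k j)
    (hgcd : Finset.univ.gcd w = 1) (j₀ : Fin m) (hodd : Odd (w j₀ * k j₀))
    (lam : ℂ) (hlam : ‖lam‖ = 1)
    (h : ∀ j, ∃ A : Matrix (Fin (k j)) (Fin (k j)) ℂ, IsUnit A ∧
        A * A.map (starRingEnd ℂ) =
          (lam ^ (w j)) • (1 : Matrix (Fin (k j)) (Fin (k j)) ℂ)) :
    lam = 1 := by
  have hpow : ∀ j, (lam ^ 2) ^ w j = 1 := fun j => by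
    obtain ⟨A, hA, hAA⟩ := h j
    have : NeZero (k j) := ⟨(hk j).ne'⟩
    rw [← pow_mul, mul_comm, pow_mul]
    exact Complex.sq_eq_one_of_conj_eq_of_norm_eq_one
      (Matrix.star_eq_of_mul_map_star_eq_smul_one hA.ne_zero hAA) (by rw [norm_pow, hlam, one_pow])
  have hsq : lam ^ 2 = 1 := by
    simpa [hgcd] using pow_finset_gcd_eq_one fun j (_ : j ∈ Finset.univ) => hpow j
  refine (sq_eq_one_iff.mp hsq).resolve_right ?_
  rintro rfl
  obtain ⟨A, -, hAA⟩ := h j₀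
  have hnonneg := Matrix.pow_card_nonneg_of_mul_map_star_eq_smul_one hAA
  rw [Fintype.card_fin, ← pow_mul, hodd.neg_one_pow] at hnonneg
  norm_num at hnonneg

/-- let `w₁,…,w_m` be positive integers with `gcd(w₁,…,w_m) = 1` and
`k₁,…,k_m` positive integers with `w_{j₀}·k_{j₀}` odd for some `j₀`. If `λ ∈ ℂ` with
`|λ| = 1` is such that for every `j` there is an invertible `k_j×k_j` complex matrix
`A_j` with `A_j·Ā_j = λ^{w_j}·I_{k_j}`, then `λ = 1`. -/
theorem lambda_eq_one_of_odd_weight_times_mult (m : ℕ) (hm : 1 ≤ m)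
    (w k : Fin m → ℕ) (hw : ∀ j, 0 < w j) (hk : ∀ j, 0 < k j)
    (hgcd : Finset.univ.gcd w = 1) (j₀ : Fin m) (hodd : Odd (w j₀ * k j₀))
    (lam : ℂ) (hlam : ‖lam‖ = 1)
    (h : ∀ j, ∃ A : Matrix (Fin (k j)) (Fin (k j)) ℂ, IsUnit A ∧
        A * A.map (starRingEnd ℂ) =
          (lam ^ (w j)) • (1 : Matrix (Fin (k j)) (Fin (k j)) ℂ)) :
    lam = 1 :=
  lambda_eq_one_of_odd_weight_times_mult_general m w k hk hgcd j₀ hodd lam hlam h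
end

section
/- Let β : ℂ⁴ → ℂ⁴ be the ℝ-linear map β(z₁,z₂,z₃,z₄) = (z̄₂,−z̄₁,z̄₄,−z̄₃), regarded as an ℝ-linear map of ℝ^8 under the identification z_j = x_{2j−1} + ix_{2j}. Then the pullback of the Cayley form Ω₀ along β equals Ω₀. -/
noncomputable section

/-- `dx_i ∧ dx_j ∧ dx_k ∧ dx_l` as a constant alternating 4-form on `ℝ^8`:
its value on vectors `v₁,…,v₄` is the determinant of the 4×4 matrix of the
`i,j,k,l`-th coordinates of the `v`'s. -/
def dx4 (i j k l : Fin 8) : AlternatingMap ℝ (Fin 8 → ℝ) ℝ (Fin 4) :=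
  (Matrix.detRowAlternating : AlternatingMap ℝ (Fin 4 → ℝ) ℝ (Fin 4)).compLinearMap
    (LinearMap.pi fun a => LinearMap.proj (![i, j, k, l] a))

/-- `dx_i ∧ dx_j` as a constant alternating 2-form on `ℝ^8`. -/
def dx2 (i j : Fin 8) : AlternatingMap ℝ (Fin 8 → ℝ) ℝ (Fin 2) :=
  (Matrix.detRowAlternating : AlternatingMap ℝ (Fin 2 → ℝ) ℝ (Fin 2)).compLinearMap
    (LinearMap.pi fun a => LinearMap.proj (![i, j] a))

/-- The Cayley 4-form `Ω₀` on `ℝ^8` (indices shifted to `0,…,7`). -/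
def CayleyForm : AlternatingMap ℝ (Fin 8 → ℝ) ℝ (Fin 4) :=
  dx4 0 1 2 3 + dx4 0 1 4 5 + dx4 0 1 6 7 + dx4 0 2 4 6 - dx4 0 2 5 7 - dx4 0 3 4 7
    - dx4 0 3 5 6 + dx4 4 5 6 7 + dx4 2 3 6 7 + dx4 2 3 4 5 + dx4 1 3 5 7 - dx4 1 3 4 6
    - dx4 1 2 5 6 - dx4 1 2 4 7

/-- The standard Kähler form `ω₀ = dx₁∧dx₂ + dx₃∧dx₄ + dx₅∧dx₆ + dx₇∧dx₈` on `ℝ^8 ≅ ℂ^4`. -/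
def omega0 : AlternatingMap ℝ (Fin 8 → ℝ) ℝ (Fin 2) :=
  dx2 0 1 + dx2 2 3 + dx2 4 5 + dx2 6 7

/-- The wedge product of two alternating 2-forms on `ℝ^8`, as an alternating 4-form
(determinant/shuffle convention, so that `dx_{12} ∧ dx_{34} = dx_{1234}`). -/
def wedge22 (α β : AlternatingMap ℝ (Fin 8 → ℝ) ℝ (Fin 2)) :
    AlternatingMap ℝ (Fin 8 → ℝ) ℝ (Fin 4) :=
  AlternatingMap.domDomCongr finSumFinEquiv
    ((TensorProduct.lid ℝ ℝ).toLinearMap.compAlternatingMap (α.domCoprod β))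

/-- The `ℝ`-linear map `ℝ^8 → ℂ^4`, `x ↦ (z₁,…,z₄)` with `z_j = x_{2j－1} + i·x_{2j}`. -/
def dzLin : (Fin 8 → ℝ) →ₗ[ℝ] (Fin 4 → ℂ) :=
  LinearMap.pi fun j =>
    Complex.ofRealAm.toLinearMap.comp (LinearMap.proj (⟨2 * j.val, by omega⟩ : Fin 8)) +
      Complex.I • Complex.ofRealAm.toLinearMap.comp (LinearMap.proj (⟨2 * j.val + 1, by omega⟩ : Fin 8))

/-- The complex determinant on `ℂ^4`, viewed as an `ℝ`-alternating 4-form. -/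
def detC4R : AlternatingMap ℝ (Fin 4 → ℂ) ℂ (Fin 4) :=
  { (Matrix.detRowAlternating :
        AlternatingMap ℂ (Fin 4 → ℂ) ℂ (Fin 4)).toMultilinearMap.restrictScalars ℝ with
    map_eq_zero_of_eq' := fun v i j h hij =>
      (Matrix.detRowAlternating : AlternatingMap ℂ (Fin 4 → ℂ) ℂ (Fin 4)).map_eq_zero_of_eq
        v h hij }

/-- The holomorphic volume form `θ₀ = dz₁∧dz₂∧dz₃∧dz₄`, a complex-valued
`ℝ`-alternating 4-form on `ℝ^8`. -/
def Theta0 : AlternatingMap ℝ (Fin 8 → ℝ) ℂ (Fin 4) :=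
  detC4R.compLinearMap dzLin

/-- The matrix of the `ℝ`-linear map `β(z₁,z₂,z₃,z₄) = (z̄₂,−z̄₁,z̄₄,−z̄₃)` of `ℂ^4`,
viewed as an `ℝ`-linear map of `ℝ^8` under `z_j = x_{2j−1} + i·x_{2j}`. -/
def betaMat : Matrix (Fin 8) (Fin 8) ℝ :=
  !![0, 0, 1, 0, 0, 0, 0, 0;
     0, 0, 0, -1, 0, 0, 0, 0;
     -1, 0, 0, 0, 0, 0, 0, 0;
     0, 1, 0, 0, 0, 0, 0, 0;
     0, 0, 0, 0, 0, 0, 1, 0;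
     0, 0, 0, 0, 0, 0, 0, -1;
     0, 0, 0, 0, -1, 0, 0, 0;
     0, 0, 0, 0, 0, 1, 0, 0]

section Aux
variable {α : Type*} (a b c d e f g h : α)
lemma vec8_0 : ![a,b,c,d,e,f,g,h] 0 = a := rfl
lemma vec8_1 : ![a,b,c,d,e,f,g,h] 1 = b := rfl
lemma vec8_2 : ![a,b,c,d,e,f,g,h] 2 = c := rfl
lemma vec8_3 : ![a,b,c,d,e,f,g,h] 3 = d := rfl
lemma vec8_4 : ![a,b,c,d,e,f,g,h] 4 = e := rfl
lemma vec8_5 : ![a,b,c,d,e,f,g,h] 5 = f := rfl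
lemma vec8_6 : ![a,b,c,d,e,f,g,h] 6 = g := rfl
lemma vec8_7 : ![a,b,c,d,e,f,g,h] 7 = h := rfl
end Aux

lemma detfour_aux (M : Matrix (Fin 4) (Fin 4) ℝ) : M.det =
    M 0 0*M 1 1*M 2 2*M 3 3 - M 0 0*M 1 1*M 2 3*M 3 2 - M 0 0*M 1 2*M 2 1*M 3 3 + M 0 0*M 1 2*M 2 3*M 3 1 + M 0 0*M 1 3*M 2 1*M 3 2 - M 0 0*M 1 3*M 2 2*M 3 1 - M 0 1*M 1 0*M 2 2*M 3 3 + M 0 1*M 1 0*M 2 3*M 3 2 + M 0 1*M 1 2*M 2 0*M 3 3 - M 0 1*M 1 2*M 2 3*M 3 0 - M 0 1*M 1 3*M 2 0*M 3 2 + M 0 1*M 1 3*M 2 2*M 3 0 + M 0 2*M 1 0*M 2 1*M 3 3 - M 0 2*M 1 0*M 2 3*M 3 1 - M 0 2*M 1 1*M 2 0*M 3 3 + M 0 2*M 1 1*M 2 3*M 3 0 + M 0 2*M 1 3*M 2 0*M 3 1 - M 0 2*M 1 3*M 2 1*M 3 0 - M 0 3*M 1 0*M 2 1*M 3 2 + M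 0 3*M 1 0*M 2 2*M 3 1 + M 0 3*M 1 1*M 2 0*M 3 2 - M 0 3*M 1 1*M 2 2*M 3 0 - M 0 3*M 1 2*M 2 0*M 3 1 + M 0 3*M 1 2*M 2 1*M 3 0 := by
  simp [Matrix.det_succ_row_zero, Matrix.det_fin_three, Fin.sum_univ_succ,
    show Fin.succAbove (1 : Fin 4) (2 : Fin 3) = (3 : Fin 4) from rfl,
    show Fin.succAbove (2 : Fin 4) (2 : Fin 3) = (3 : Fin 4) from rfl,
    show Fin.succAbove (3 : Fin 4) (2 : Fin 3) = (2 : Fin 4) from rfl,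
    show Fin.succAbove (0 : Fin 4) (2 : Fin 3) = (3 : Fin 4) from rfl,
    show (Fin.succ 2 : Fin 4) = 3 from rfl, show (Fin.castSucc 2 : Fin 4) = 2 from rfl]
  ring

lemma dx4_apply (i j k l : Fin 8) (v : Fin 4 → Fin 8 → ℝ) :
    dx4 i j k l v =
    v 0 i*v 1 j*v 2 k*v 3 l - v 0 i*v 1 j*v 2 l*v 3 k - v 0 i*v 1 k*v 2 j*v 3 l + v 0 i*v 1 k*v 2 l*v 3 j + v 0 i*v 1 l*v 2 j*v 3 k - v 0 i*v 1 l*v 2 k*v 3 j - v 0 j*v 1 i*v 2 k*v 3 l + v 0 j*v 1 i*v 2 l*v 3 k + v 0 j*v 1 k*v 2 i*v 3 l - v 0 j*v 1 k*v 2 l*v 3 i - v 0 j*v 1 l*v 2 i*v 3 k + v 0 j*v 1 l*v 2 k*v 3 i + v 0 k*v 1 i*v 2 j*v 3 l - v 0 k*v 1 i*v 2 l*v 3 j - v 0 k*v 1 j*v 2 i*v 3 l + v 0 k*v 1 j*v 2 l*v 3 i + v 0 k*v 1 l*v 2 i*v 3 j - v 0 k*v 1 l*v 2 j*v 3 i -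 v 0 l*v 1 i*v 2 j*v 3 k + v 0 l*v 1 i*v 2 k*v 3 j + v 0 l*v 1 j*v 2 i*v 3 k - v 0 l*v 1 j*v 2 k*v 3 i - v 0 l*v 1 k*v 2 i*v 3 j + v 0 l*v 1 k*v 2 j*v 3 i := by
  have h : dx4 i j k l v = Matrix.det (Matrix.of fun a b => v a (![i,j,k,l] b)) := rfl
  rw [h, detfour_aux]
  simp [Matrix.of_apply]

lemma betaMat_mulVec (x : Fin 8 → ℝ) :
    Matrix.toLin' betaMat x = ![x 2, -x 3, -x 0, x 1, x 6, -x 7, -x 4, x 5] := by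
  have H : ∀ i : Fin 8, Matrix.toLin' betaMat x i =
      ![x 2, -x 3, -x 0, x 1, x 6, -x 7, -x 4, x 5] i := by
    have h0 : Matrix.toLin' betaMat x 0 = x 2 := by
      simp only [Matrix.toLin'_apply, Matrix.mulVec, dotProduct, Fin.sum_univ_eight,
        betaMat, Matrix.of_apply, vec8_0, vec8_1, vec8_2, vec8_3, vec8_4, vec8_5, vec8_6, vec8_7]
      ring
    have h1 : Matrix.toLin' betaMat x 1 = -x 3 := by
      simp only [Matrix.toLin'_apply, Matrix.mulVec, dotProduct, Fin.sum_univ_eight,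
        betaMat, Matrix.of_apply, vec8_0, vec8_1, vec8_2, vec8_3, vec8_4, vec8_5, vec8_6, vec8_7]
      ring
    have h2 : Matrix.toLin' betaMat x 2 = -x 0 := by
      simp only [Matrix.toLin'_apply, Matrix.mulVec, dotProduct, Fin.sum_univ_eight,
        betaMat, Matrix.of_apply, vec8_0, vec8_1, vec8_2, vec8_3, vec8_4, vec8_5, vec8_6, vec8_7]
      ring
    have h3 : Matrix.toLin' betaMat x 3 = x 1 := by
      simp only [Matrix.toLin'_apply, Matrix.mulVec, dotProduct, Fin.sum_univ_eight,
        betaMat, Matrix.of_apply, vec8_0, vec8_1, vec8_2, vec8_3, vec8_4, vec8_5, vec8_6, vec8_7]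
      ring
    have h4 : Matrix.toLin' betaMat x 4 = x 6 := by
      simp only [Matrix.toLin'_apply, Matrix.mulVec, dotProduct, Fin.sum_univ_eight,
        betaMat, Matrix.of_apply, vec8_0, vec8_1, vec8_2, vec8_3, vec8_4, vec8_5, vec8_6, vec8_7]
      ring
    have h5 : Matrix.toLin' betaMat x 5 = -x 7 := by
      simp only [Matrix.toLin'_apply, Matrix.mulVec, dotProduct, Fin.sum_univ_eight,
        betaMat, Matrix.of_apply, vec8_0, vec8_1, vec8_2, vec8_3, vec8_4, vec8_5, vec8_6, vec8_7]
      ring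
    have h6 : Matrix.toLin' betaMat x 6 = -x 4 := by
      simp only [Matrix.toLin'_apply, Matrix.mulVec, dotProduct, Fin.sum_univ_eight,
        betaMat, Matrix.of_apply, vec8_0, vec8_1, vec8_2, vec8_3, vec8_4, vec8_5, vec8_6, vec8_7]
      ring
    have h7 : Matrix.toLin' betaMat x 7 = x 5 := by
      simp only [Matrix.toLin'_apply, Matrix.mulVec, dotProduct, Fin.sum_univ_eight,
        betaMat, Matrix.of_apply, vec8_0, vec8_1, vec8_2, vec8_3, vec8_4, vec8_5, vec8_6, vec8_7]
      ring
    intro i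
    fin_cases i
    · exact h0
    · exact h1
    · exact h2
    · exact h3
    · exact h4
    · exact h5
    · exact h6
    · exact h7
  funext i; exact H i

/-- the pullback of the Cayley form `Ω₀` along `β` equals `Ω₀`,
i.e. `β ∈ Spin(7)`. -/
theorem cayley_pullback_beta :
    CayleyForm.compLinearMap (Matrix.toLin' betaMat) = CayleyForm := by
  refine AlternatingMap.ext fun v => ?_
  simp only [CayleyForm, AlternatingMap.compLinearMap_apply, AlternatingMap.sub_apply,
    AlternatingMap.add_apply, AlternatingMap.neg_apply, betaMat_mulVec, dx4_apply,
    vec8_0, vec8_1, vec8_2, vec8_3, vec8_4, vec8_5, vec8_6, vec8_7]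
  ring

end
end

section
/- Let a₀,…,a₅ be positive integers with a₀ = a₁ and a₂ = a₃, and let τ̃ : ℂ⁶ → ℂ⁶ be the map τ̃(z₀,z₁,z₂,z₃,z₄,z₅) = (z̄₁,−z̄₀,z̄₃,−z̄₂,z̄₄,z̄₅). If z ∈ ℂ⁶ and μ ∈ ℂ satisfy τ̃(z)_i = μ^{a_i}·z_i for all i ∈ {0,…,5}, then z₀ = z₁ = z₂ = z₃ = 0. -/
/-- The lift `τ̃(z₀,…,z₅) = (z̄₁,−z̄₀,z̄₃,−z̄₂,z̄₄,z̄₅)` of the non-standard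
antiholomorphic involution of `ℂℙ⁵_{a₀,…,a₅}` to `ℂ⁶`. -/
def tauTilde (z : Fin 6 → ℂ) : Fin 6 → ℂ :=
  ![(starRingEnd ℂ) (z 1), -(starRingEnd ℂ) (z 0), (starRingEnd ℂ) (z 3),
    -(starRingEnd ℂ) (z 2), (starRingEnd ℂ) (z 4), (starRingEnd ℂ) (z 5)]

lemma aux_pair (c w v : ℂ) (h1 : (starRingEnd ℂ) v = c * w)
    (h2 : -(starRingEnd ℂ) w = c * v) : w = 0 ∧ v = 0 := by
  have h2' : -w = (starRingEnd ℂ) c * (starRingEnd ℂ) v := by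
    have := congrArg (starRingEnd ℂ) h2
    simpa only [map_neg, map_mul, Complex.conj_conj] using this
  rw [h1] at h2'
  have key : (1 + (Complex.normSq c : ℂ)) * w = 0 := by
    have hn : (Complex.normSq c : ℂ) = (starRingEnd ℂ) c * c :=
      Complex.normSq_eq_conj_mul_self
    rw [hn]
    linear_combination -h2'
  have hne : (1 + (Complex.normSq c : ℂ)) ≠ 0 := by
    intro hc
    have := congrArg Complex.re hc
    simp at this
    nlinarith [Complex.normSq_nonneg c]
  have hw : w = 0 := by
    rcases mul_eq_zero.mp key with h | h
    · exact absurd h hne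
    · exact h
  have hv : v = 0 := by
    have : (starRingEnd ℂ) v = 0 := by rw [h1, hw, mul_zero]
    simpa using this
  exact ⟨hw, hv⟩

/-- if `a₀,…,a₅` are positive integers with `a₀ = a₁` and `a₂ = a₃`,
and `z ∈ ℂ⁶`, `μ ∈ ℂ` satisfy `τ̃(z)ᵢ = μ^{aᵢ}·zᵢ` for all `i`, then
`z₀ = z₁ = z₂ = z₃ = 0`; i.e. the fixed locus of `τ` lies in the stratum `S₄,₅`. -/
theorem fixed_locus_in_S45 (a : Fin 6 → ℕ) (ha : ∀ i, 0 < a i)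
    (h01 : a 0 = a 1) (h23 : a 2 = a 3) (z : Fin 6 → ℂ) (μ : ℂ)
    (h : ∀ i, tauTilde z i = μ ^ (a i) * z i) :
    z 0 = 0 ∧ z 1 = 0 ∧ z 2 = 0 ∧ z 3 = 0 := by
  have h0 := h 0; have h1 := h 1; have h2 := h 2; have h3 := h 3
  simp only [tauTilde, Matrix.cons_val_zero, Matrix.cons_val_one, Matrix.head_cons,
    Matrix.cons_val_two, Matrix.tail_cons, Matrix.cons_val_three] at h0 h1 h2 h3
  rw [← h01] at h1
  rw [← h23] at h3
  obtain ⟨e0, e1⟩ := aux_pair (μ ^ a 0) (z 0) (z 1) h0 h1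
  obtain ⟨e2, e3⟩ := aux_pair (μ ^ a 2) (z 2) (z 3) h2 h3
  exact ⟨e0, e1, e2, e3⟩
end

section
/- Let N = ℤ⁴ + ℤ·g₁ ⊆ ℚ⁴ where g₁ = (1/21)(1,1,7,12). Let S be the set of eleven vectors {e₁, e₂, e₃, e₄, (1/21)(1,1,7,12), (1/21)(2,2,14,3), (1/21)(3,3,0,15), (1/21)(4,4,7,6), (1/21)(6,6,0,9), (1/21)(7,7,7,0), (1/21)(9,9,0,3)}, where e₁,…,e₄ are the standard basis vectors. Then every element of N with all four coordinates nonnegative is a linear combination of elements of S with nonnegative integer coefficients. -/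
/-- The lattice `N = ℤ⁴ + ℤ·g₁ ⊆ ℚ⁴` with `g₁ = (1/21)(1,1,7,12)`, the subgroup of
`ℚ⁴` generated by the standard basis vectors and `g₁`. -/
def N21 : Submodule ℤ (Fin 4 → ℚ) :=
  Submodule.span ℤ
    (insert (![1/21, 1/21, 7/21, 12/21] : Fin 4 → ℚ)
      (Set.range fun i : Fin 4 => (Pi.single i 1 : Fin 4 → ℚ)))

/-- The eleven age-1 elements of the cone for the singularity `(1/21)(1,1,7,12)`. -/
def S21 : Fin 11 → (Fin 4 → ℚ) :=
  ![(Pi.single 0 1 : Fin 4 → ℚ), Pi.single 1 1, Pi.single 2 1, Pi.single 3 1,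
    ![1/21, 1/21, 7/21, 12/21], ![2/21, 2/21, 14/21, 3/21], ![3/21, 3/21, 0, 15/21],
    ![4/21, 4/21, 7/21, 6/21], ![6/21, 6/21, 0, 9/21], ![7/21, 7/21, 7/21, 0],
    ![9/21, 9/21, 0, 3/21]]

/-- `21 ×` the eleven age-1 generators, as integer vectors. -/
def T21 : Fin 11 → Fin 4 → ℤ :=
  ![![21,0,0,0], ![0,21,0,0], ![0,0,21,0], ![0,0,0,21],
    ![1,1,7,12], ![2,2,14,3], ![3,3,0,15], ![4,4,7,6],
    ![6,6,0,9], ![7,7,7,0], ![9,9,0,3]]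

lemma le_T' (j : Fin 11) (t0 t1 t2 t3 : ℤ)
    (ht : T21 j 0 = t0 ∧ T21 j 1 = t1 ∧ T21 j 2 = t2 ∧ T21 j 3 = t3)
    (y : Fin 4 → ℤ) (h0 : t0 ≤ y 0) (h1 : t1 ≤ y 1) (h2 : t2 ≤ y 2) (h3 : t3 ≤ y 3) :
    ∀ i, T21 j i ≤ y i := by
  obtain ⟨e0, e1, e2, e3⟩ := ht
  intro i
  fin_cases i
  · rw [show (⟨0, by norm_num⟩ : Fin 4) = 0 from rfl, e0]; exact h0
  · rw [show (⟨1, by norm_num⟩ : Fin 4) = 1 from rfl, e1]; exact h1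
  · rw [show (⟨2, by norm_num⟩ : Fin 4) = 2 from rfl, e2]; exact h2
  · rw [show (⟨3, by norm_num⟩ : Fin 4) = 3 from rfl, e3]; exact h3

lemma dom21 (y : Fin 4 → ℤ) (h0 : ∀ i, 0 ≤ y i)
    (h1 : y 1 % 21 = y 0 % 21) (h2 : y 2 % 21 = 7 * y 0 % 21)
    (h3 : y 3 % 21 = 12 * y 0 % 21) (hne : y 0 + y 1 + y 2 + y 3 ≠ 0) :
    ∃ j, ∀ i, T21 j i ≤ y i := by
  have ha := h0 0
  have hb := h0 1
  have hc := h0 2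
  have hd := h0 3
  obtain ⟨q, r, hr0, hr1, hqr⟩ : ∃ q r : ℤ, 0 ≤ r ∧ r < 21 ∧ y 0 = 21 * q + r :=
    ⟨y 0 / 21, y 0 % 21, by omega, by omega, by omega⟩
  rw [hqr] at h1 h2 h3 ha hne
  have hsplit : r = 0 ∨ r = 1 ∨ r = 2 ∨ r = 3 ∨ r = 4 ∨ r = 5 ∨ r = 6 ∨ r = 7 ∨ r = 8 ∨ r = 9 ∨ r = 10 ∨ r = 11 ∨ r = 12 ∨ r = 13 ∨ r = 14 ∨ r = 15 ∨ r = 16 ∨ r = 17 ∨ r = 18 ∨ r = 19 ∨ r = 20 := by omega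
  rcases hsplit with h|h|h|h|h|h|h|h|h|h|h|h|h|h|h|h|h|h|h|h|h <;> subst h
  · -- r = 0 : all coordinates divisible by 21, one of them is ≥ 21
    have h4 : 21 ≤ y 0 ∨ 21 ≤ y 1 ∨ 21 ≤ y 2 ∨ 21 ≤ y 3 := by omega
    rcases h4 with h4|h4|h4|h4
    · exact ⟨0, le_T' 0 21 0 0 0 (by decide) y (by omega) hb hc hd⟩
    · exact ⟨1, le_T' 1 0 21 0 0 (by decide) y (by omega) h4 hc hd⟩
    · exact ⟨2, le_T' 2 0 0 21 0 (by decide) y (by omega) hb h4 hd⟩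
    · exact ⟨3, le_T' 3 0 0 0 21 (by decide) y (by omega) hb hc h4⟩
  · exact ⟨4, le_T' 4 1 1 7 12 (by decide) y (by omega) (by omega) (by omega) (by omega)⟩
  · exact ⟨5, le_T' 5 2 2 14 3 (by decide) y (by omega) (by omega) (by omega) (by omega)⟩
  · exact ⟨6, le_T' 6 3 3 0 15 (by decide) y (by omega) (by omega) (by omega) (by omega)⟩
  · exact ⟨7, le_T' 7 4 4 7 6 (by decide) y (by omega) (by omega) (by omega) (by omega)⟩
  · exact ⟨7, le_T' 7 4 4 7 6 (by decide) y (by omega) (by omega) (by omega) (by omega)⟩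
  · exact ⟨8, le_T' 8 6 6 0 9 (by decide) y (by omega) (by omega) (by omega) (by omega)⟩
  · exact ⟨9, le_T' 9 7 7 7 0 (by decide) y (by omega) (by omega) (by omega) (by omega)⟩
  · exact ⟨7, le_T' 7 4 4 7 6 (by decide) y (by omega) (by omega) (by omega) (by omega)⟩
  · exact ⟨10, le_T' 10 9 9 0 3 (by decide) y (by omega) (by omega) (by omega) (by omega)⟩
  · exact ⟨7, le_T' 7 4 4 7 6 (by decide) y (by omega) (by omega) (by omega) (by omega)⟩
  · exact ⟨7, le_T' 7 4 4 7 6 (by decide) y (by omega) (by omega) (by omega) (by omega)⟩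
  · exact ⟨6, le_T' 6 3 3 0 15 (by decide) y (by omega) (by omega) (by omega) (by omega)⟩
  · exact ⟨7, le_T' 7 4 4 7 6 (by decide) y (by omega) (by omega) (by omega) (by omega)⟩
  · exact ⟨9, le_T' 9 7 7 7 0 (by decide) y (by omega) (by omega) (by omega) (by omega)⟩
  · exact ⟨8, le_T' 8 6 6 0 9 (by decide) y (by omega) (by omega) (by omega) (by omega)⟩
  · exact ⟨10, le_T' 10 9 9 0 3 (by decide) y (by omega) (by omega) (by omega) (by omega)⟩
  · exact ⟨7, le_T' 7 4 4 7 6 (by decide) y (by omega) (by omega) (by omega) (by omega)⟩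
  · exact ⟨10, le_T' 10 9 9 0 3 (by decide) y (by omega) (by omega) (by omega) (by omega)⟩
  · exact ⟨7, le_T' 7 4 4 7 6 (by decide) y (by omega) (by omega) (by omega) (by omega)⟩
  · exact ⟨7, le_T' 7 4 4 7 6 (by decide) y (by omega) (by omega) (by omega) (by omega)⟩

lemma Tprops (j : Fin 11) :
    T21 j 0 + T21 j 1 + T21 j 2 + T21 j 3 = 21 ∧
    T21 j 1 % 21 = T21 j 0 % 21 ∧ T21 j 2 % 21 = 7 * T21 j 0 % 21 ∧
    T21 j 3 % 21 = 12 * T21 j 0 % 21 ∧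
    0 ≤ T21 j 0 ∧ 0 ≤ T21 j 1 ∧ 0 ≤ T21 j 2 ∧ 0 ≤ T21 j 3 := by
  fin_cases j <;> decide

lemma step21 (y : Fin 4 → ℤ) (j0 : Fin 11) (c : Fin 11 → ℕ)
    (h : ∀ i, y i - T21 j0 i = ∑ j, (c j : ℤ) * T21 j i) :
    ∃ c' : Fin 11 → ℕ, ∀ i, y i = ∑ j, (c' j : ℤ) * T21 j i := by
  refine ⟨fun j => c j + if j = j0 then 1 else 0, fun i => ?_⟩
  have hh := h i
  have key : (∑ j, ((c j + if j = j0 then 1 else 0 : ℕ) : ℤ) * T21 j i)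
      = (∑ j, (c j : ℤ) * T21 j i) + T21 j0 i := by
    have : ∀ j : Fin 11, ((c j + if j = j0 then 1 else 0 : ℕ) : ℤ) * T21 j i
        = (c j : ℤ) * T21 j i + (if j = j0 then T21 j i else 0) := by
      intro j; split_ifs <;> push_cast <;> ring
    rw [Finset.sum_congr rfl fun j _ => this j, Finset.sum_add_distrib,
      Finset.sum_ite_eq' Finset.univ j0 (fun j => T21 j i)]
    simp
  rw [key]
  linarith

lemma key21 : ∀ n : ℕ, ∀ y : Fin 4 → ℤ, (∀ i, 0 ≤ y i) →
    y 0 + y 1 + y 2 + y 3 = (n : ℤ) →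
    y 1 % 21 = y 0 % 21 → y 2 % 21 = 7 * y 0 % 21 → y 3 % 21 = 12 * y 0 % 21 →
    ∃ c : Fin 11 → ℕ, ∀ i, y i = ∑ j, (c j : ℤ) * T21 j i := by
  intro n
  induction n using Nat.strong_induction_on with
  | _ n ih =>
  intro y h0 hs h1 h2 h3
  by_cases hz : y 0 + y 1 + y 2 + y 3 = 0
  · refine ⟨0, fun i => ?_⟩
    have e0 := h0 0; have e1 := h0 1; have e2 := h0 2; have e3 := h0 3
    have hy : y i = 0 := by
      fin_cases i
      · show y 0 = 0; omega
      · show y 1 = 0; omega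
      · show y 2 = 0; omega
      · show y 3 = 0; omega
    simp [hy]
  · obtain ⟨j0, hle⟩ := dom21 y h0 h1 h2 h3 hz
    obtain ⟨hT, t1, t2, t3, n0, n1, n2, n3⟩ := Tprops j0
    have l0 := hle 0; have l1 := hle 1; have l2 := hle 2; have l3 := hle 3
    have h21 : 21 ≤ n := by omega
    obtain ⟨c, hc⟩ := ih (n - 21) (by omega) (fun i => y i - T21 j0 i)
      (fun i => sub_nonneg.2 (hle i))
      (by show y 0 - T21 j0 0 + (y 1 - T21 j0 1) + (y 2 - T21 j0 2) + (y 3 - T21 j0 3) = ((n - 21 : ℕ) : ℤ); omega)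
      (by show (y 1 - T21 j0 1) % 21 = (y 0 - T21 j0 0) % 21; omega)
      (by show (y 2 - T21 j0 2) % 21 = 7 * (y 0 - T21 j0 0) % 21; omega)
      (by show (y 3 - T21 j0 3) % 21 = 12 * (y 0 - T21 j0 0) % 21; omega)
    exact step21 y j0 c hc

lemma TS21 : ∀ (j : Fin 11) (i : Fin 4), ((T21 j i : ℤ) : ℚ) = 21 * S21 j i := by
  intro j i
  fin_cases j <;> fin_cases i <;> norm_num [T21, S21, Pi.single_apply, Fin.ext_iff] <;> decide

/-- every element of `N = ℤ⁴ + ℤ·(1/21)(1,1,7,12)` with nonnegative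
coordinates is an `ℕ`-linear combination of the eleven age-1 elements `S`. -/
theorem age_one_elements_generate :
    ∀ x ∈ N21, (∀ i, 0 ≤ x i) →
      ∃ c : Fin 11 → ℕ, x = ∑ j, (c j : ℚ) • S21 j := by
  intro x hx hpos
  rw [N21, Submodule.mem_span_insert] at hx
  obtain ⟨a, z, hzmem, hxeq⟩ := hx
  rw [Submodule.mem_span_range_iff_exists_fun] at hzmem
  obtain ⟨m, hm⟩ := hzmem
  have hzi : ∀ i, z i = (m i : ℚ) := by
    intro i
    rw [← hm]
    simp [Finset.sum_apply, Pi.single_apply]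
  have hxi : ∀ i, x i = (a : ℚ) * (![1/21, 1/21, 7/21, 12/21] : Fin 4 → ℚ) i + (m i : ℚ) := by
    intro i
    rw [hxeq]
    simp only [Pi.add_apply, Pi.smul_apply, zsmul_eq_mul, Pi.mul_apply, Pi.intCast_apply, hzi i]
  set y : Fin 4 → ℤ := ![a + 21 * m 0, a + 21 * m 1, 7 * a + 21 * m 2, 12 * a + 21 * m 3] with hy
  have hy0 : y 0 = a + 21 * m 0 := rfl
  have hy1 : y 1 = a + 21 * m 1 := rfl
  have hy2 : y 2 = 7 * a + 21 * m 2 := rfl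
  have hy3 : y 3 = 12 * a + 21 * m 3 := rfl
  have hyx : ∀ i, (y i : ℚ) = 21 * x i := by
    intro i
    fin_cases i
    · show ((y 0 : ℤ) : ℚ) = 21 * x 0
      rw [hxi 0, hy0]; push_cast; norm_num; ring
    · show ((y 1 : ℤ) : ℚ) = 21 * x 1
      rw [hxi 1, hy1]; push_cast; norm_num; ring
    · show ((y 2 : ℤ) : ℚ) = 21 * x 2
      rw [hxi 2, hy2]; push_cast; norm_num; ring
    · show ((y 3 : ℤ) : ℚ) = 21 * x 3
      rw [hxi 3, hy3]; push_cast; norm_num; ring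
  have hynn : ∀ i, 0 ≤ y i := by
    intro i
    have h1 : (0:ℚ) ≤ (y i : ℚ) := by rw [hyx i]; have := hpos i; linarith
    exact_mod_cast h1
  have e0 := hynn 0; have e1 := hynn 1; have e2 := hynn 2; have e3 := hynn 3
  obtain ⟨c, hc⟩ := key21 (y 0 + y 1 + y 2 + y 3).toNat y hynn (by omega)
    (by rw [hy0, hy1]; omega) (by rw [hy0, hy2]; omega) (by rw [hy0, hy3]; omega)
  refine ⟨c, ?_⟩
  funext i
  have e1 : (∑ j, (c j : ℚ) • S21 j) i = ∑ j, (c j : ℚ) * S21 j i := by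
    simp [Finset.sum_apply]
  have e2 : (21:ℚ) * x i = 21 * ∑ j, (c j : ℚ) * S21 j i := by
    rw [← hyx i, hc i, Finset.mul_sum]
    push_cast
    refine Finset.sum_congr rfl fun j _ => ?_
    rw [show ((T21 j i : ℤ) : ℚ) = 21 * S21 j i from TS21 j i]
    ring
  have h21 : (21:ℚ) ≠ 0 := by norm_num
  rw [e1]
  exact mul_left_cancel₀ h21 e2
end

section
/- Let N = ℤ⁴ + ℤ·g₁ ⊆ ℚ⁴ where g₁ = (1/21)(1,1,7,12), and let S be the set of eleven vectors {e₁, e₂, e₃, e₄, (1/21)(1,1,7,12), (1/21)(2,2,14,3), (1/21)(3,3,0,15), (1/21)(4,4,7,6), (1/21)(6,6,0,9), (1/21)(7,7,7,0), (1/21)(9,9,0,3)}, where e₁,…,e₄ are the standard basis vectors. Then S is a minimal generating set: no element of S is a linear combination with nonnegative integer coefficients of the other ten elements of S. -/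
open Function

lemma Fintype.exists_eq_single_of_sum_eq_one {ι : Type*} [Fintype ι] [DecidableEq ι]
    {c : ι → ℕ} (h : ∑ i, c i = 1) : ∃ i, c = Pi.single i 1 := by
  obtain ⟨i, hi⟩ := (Finsupp.equivFunOnFinite.symm c).sum_eq_one_iff.1 <| by
    rwa [Finsupp.sum_fintype _ _ fun _ => rfl]
  exact ⟨i, by simpa [← Finsupp.single_eq_pi_single] using congrArg Finsupp.equivFunOnFinite hi⟩

theorem not_exists_nat_combination_of_others {ι R M : Type*} [Fintype ι] [Semiring R]
    [CharZero R] [AddCommMonoid M] [Module R M] (φ : M →ₗ[R] R) {v : ι → M}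
    (hv : Injective v) (hφ : ∀ i, φ (v i) = 1) (j : ι) :
    ¬ ∃ c : ι → ℕ, c j = 0 ∧ v j = ∑ i, (c i : R) • v i := by
  classical
  rintro ⟨c, hcj, hsum⟩
  have hc : ∑ i, c i = 1 := by
    have := congrArg φ hsum
    simp only [map_sum, map_smul, hφ, smul_eq_mul, mul_one] at this
    exact_mod_cast this.symm
  obtain ⟨i, rfl⟩ := Fintype.exists_eq_single_of_sum_eq_one hc
  rw [Fintype.sum_eq_single i fun k hk => by simp [hk]] at hsum
  simp only [Pi.single_eq_same, Nat.cast_one, one_smul] at hsum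
  simp [hv hsum] at hcj

def age {n : ℕ} : (Fin n → ℚ) →ₗ[ℚ] ℚ := ∑ k, LinearMap.proj k

lemma age_S21 (i : Fin 11) : age (S21 i) = 1 := by
  fin_cases i <;> simp [age, S21, Fin.sum_univ_four] <;> norm_num

-- Plain `decide` gets stuck on the irreducible rational arithmetic; the kernel evaluates it.
lemma S21_injective : Injective S21 := by decide +kernel

/-- the set `S` of eleven age-1 elements is a minimal generating set:
no element of `S` is an `ℕ`-linear combination of the other ten. -/
theorem age_one_elements_minimal :
    ∀ j : Fin 11, ¬ ∃ c : Fin 11 → ℕ, c j = 0 ∧ S21 j = ∑ i, (c i : ℚ) • S21 i :=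
  not_exists_nat_combination_of_others age S21_injective age_S21
end

section
/- Let (a₀,…,a₅) = (1,1,9,9,4,4) and d = 28. Then for every nonempty subset I ⊆ {0,…,5}, at least one of the following holds: (1) there exist nonnegative integers (d_i)_{i∈I} with Σ_{i∈I} d_i·a_i = 28; or (2) there exists an injective map e : I → {0,…,5}∖I such that for every j ∈ I there exist nonnegative integers (d_i)_{i∈I} with Σ_{i∈I} d_i·a_i + a_{e(j)} = 28. Moreover no a_i equals 28. -/
/-- The weights `(1,1,9,9,4,4)`. -/
def wts : Fin 6 → ℕ := ![1, 1, 9, 9, 4, 4]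

lemma single_sum (I : Finset (Fin 6)) (j : Fin 6) (hj : j ∈ I) (c : ℕ) :
    ∑ i ∈ I, (if i = j then c else 0) * wts i = c * wts j := by
  rw [Finset.sum_eq_single_of_mem j hj]
  · simp
  · intro b _ hb; simp [hb]

/-- the quasismoothness criterion holds for the weights
`(1,1,9,9,4,4)` with `d = 28`: for every nonempty `I ⊆ {0,…,5}`, either (1) there
is a monomial of weighted degree 28 in the variables indexed by `I`, or (2) there
is an injective map `e` from `I` into the complementary indices such that for every
`j ∈ I` there is a monomial of weighted degree 28 of the form
`(monomial in the variables of I)·z_{e(j)}`; moreover no `aᵢ` equals 28 (the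
hypersurface is not a linear cone). -/
theorem quasismoothness_criterion_1_1_9_9_4_4 :
    (∀ I : Finset (Fin 6), I.Nonempty →
      ((∃ d : Fin 6 → ℕ, ∑ i ∈ I, d i * wts i = 28) ∨
       (∃ e : Fin 6 → Fin 6, Set.InjOn e ↑I ∧ (∀ j ∈ I, e j ∉ I) ∧
         ∀ j ∈ I, ∃ d : Fin 6 → ℕ, (∑ i ∈ I, d i * wts i) + wts (e j) = 28))) ∧
    ∀ i, wts i ≠ 28 := by
  constructor
  · intro I hI
    by_cases h0 : (0 : Fin 6) ∈ I
    · exact Or.inl ⟨fun i => if i = 0 then 28 else 0, by rw [single_sum I 0 h0]; rfl⟩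
    by_cases h1 : (1 : Fin 6) ∈ I
    · exact Or.inl ⟨fun i => if i = 1 then 28 else 0, by rw [single_sum I 1 h1]; rfl⟩
    by_cases h4 : (4 : Fin 6) ∈ I
    · exact Or.inl ⟨fun i => if i = 4 then 7 else 0, by rw [single_sum I 4 h4]; rfl⟩
    by_cases h5 : (5 : Fin 6) ∈ I
    · exact Or.inl ⟨fun i => if i = 5 then 7 else 0, by rw [single_sum I 5 h5]; rfl⟩
    -- now I ⊆ {2, 3}
    have hsub : ∀ j ∈ I, j = 2 ∨ j = 3 := by
      intro j hj
      fin_cases j <;> simp_all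
    right
    refine ⟨fun j => if j = 2 then 0 else 1, ?_, ?_, ?_⟩
    · intro a ha b hb hab
      rcases hsub a ha with rfl | rfl <;> rcases hsub b hb with rfl | rfl <;> simp_all
    · intro j hj
      rcases hsub j hj with rfl | rfl <;> simp_all
    · intro j hj
      refine ⟨fun i => if i = j then 3 else 0, ?_⟩
      rw [single_sum I j hj]
      rcases hsub j hj with rfl | rfl <;> rfl
  · intro i; fin_cases i <;> decide
end
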